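/- arXiv:1702.07457 — 5 statements merged into one kernel-verified Lean document; each statement's English description precedes it below -/
import Mathlib

section
/- Let f ∈ F((x^{-1})) be a formal Laurent series over a field F, and p(x)/q(x) a rational function in reduced form with q ≠ 0. If the valuation satisfies ||f(x) - p(x)/q(x)|| < -2·||q(x)|| (where ||·|| denotes the degree valuation on Laurent series, i.e. the largest exponent with nonzero coefficient), then p(x)/q(x) is a convergent of the continued fraction expansion of f. -/
open Polynomial
open scoped Classical

noncomputable section

variable {F : Type*} [Field F]

/-- The element `x = T⁻¹` of `F((T))`: we regard `F((x⁻¹))` as the field of formal Laurent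
series in `T = x⁻¹`. -/
def xx : LaurentSeries F := ((PowerSeries.X : PowerSeries F) : LaurentSeries F)⁻¹

/-- Evaluation of a polynomial in the variable `x` inside `F((x⁻¹))`. -/
def pev (p : Polynomial F) : LaurentSeries F := Polynomial.aeval (xx : LaurentSeries F) p

/-- Degree valuation `‖f‖` on `F((x⁻¹))`: the largest exponent of `x` with nonzero
coefficient (i.e. `-order` in the variable `T = x⁻¹`), with `‖0‖ = ⊥`. -/
def degB (f : LaurentSeries F) : WithBot ℤ := if f = 0 then ⊥ else (-(f.order) : ℤ)

/-- The polynomial part of a Laurent series in `x⁻¹` (the terms with nonnegative powers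
of `x`, i.e. exponents `≤ 0` of `T = x⁻¹`). -/
def polyPart (f : LaurentSeries F) : LaurentSeries F :=
  ∑ i ∈ Finset.Icc f.order 0, HahnSeries.single i (f.coeff i)

/-- The complete quotients (tails) of the continued fraction algorithm for `f`. -/
def cfTail (f : LaurentSeries F) : ℕ → LaurentSeries F
  | 0 => f
  | n + 1 => (cfTail f n - polyPart (cfTail f n))⁻¹

/-- The `n`-th partial quotient `a_n(x)` of the continued fraction of `f`. -/
def cfA (f : LaurentSeries F) (n : ℕ) : LaurentSeries F := polyPart (cfTail f n)

/-- Numerators of the convergents, shifted by one: `cfP f (n+1) = p_n`. -/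
def cfP (f : LaurentSeries F) : ℕ → LaurentSeries F
  | 0 => 1
  | 1 => cfA f 0
  | n + 2 => cfA f (n + 1) * cfP f (n + 1) + cfP f n

/-- Denominators of the convergents, shifted by one: `cfQ f (n+1) = q_n`. -/
def cfQ (f : LaurentSeries F) : ℕ → LaurentSeries F
  | 0 => 0
  | 1 => 1
  | n + 2 => cfA f (n + 1) * cfQ f (n + 1) + cfQ f n

/-!
Let `N = deg q`. Put `e_n = Q_n f - P_n`, where `P_n / Q_n` are the convergents. While the
expansion goes on, `e_{n+1} = -(fractional part of the n-th complete quotient) * e_n`, so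
the `T`-order of `e_n` grows by at least one at each step, and `‖e_n‖ = -‖Q_{n+1}‖`. Hence
there is a first `n` with `‖e_{n+1}‖ < -N` (if the expansion stops first, then
`e_{n+1} = 0`), and at that `n` we have `deg Q_{n+1} ≤ N`. For such a convergent `P / Q`
the polynomial `qP - pQ = Q (qf - p) - q (Qf - P)` has negative degree, so it vanishes.
-/

open HahnSeries

theorem HahnSeries.lt_orderTop_mul {Γ R : Type*} [AddCommMonoid Γ] [LinearOrder Γ]
    [IsOrderedCancelAddMonoid Γ] [NonUnitalNonAssocSemiring R] {x y : HahnSeries Γ R} {a b : Γ}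
    (hx : (a : WithTop Γ) ≤ x.orderTop) (hy : (b : WithTop Γ) < y.orderTop) :
    ((a + b : Γ) : WithTop Γ) < (x * y).orderTop :=
  calc ((a + b : Γ) : WithTop Γ) = a + b := WithTop.coe_add a b
    _ < x.orderTop + y.orderTop := WithTop.add_lt_add_of_le_of_lt WithTop.coe_ne_top hx hy
    _ ≤ (x * y).orderTop := orderTop_add_le_mul

theorem xx_eq_single : (xx : LaurentSeries F) = single (-1) 1 := by
  rw [xx, HahnSeries.ofPowerSeries_X]
  exact inv_eq_of_mul_eq_one_right (by simp [single_mul_single])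

theorem pev_monomial (n : ℕ) (a : F) : pev (monomial n a) = single (-(n : ℤ)) a := by
  have hC : algebraMap F (LaurentSeries F) a = single 0 a := by
    rw [← HahnSeries.C_apply, ← HahnSeries.ofPowerSeries_C]; rfl
  simp [pev, xx_eq_single, single_pow, hC, single_mul_single]

theorem coeff_pev (p : F[X]) (i : ℤ) :
    (pev p).coeff i = if i ≤ 0 then p.coeff (-i).toNat else 0 := by
  induction p using Polynomial.induction_on' with
  | add u v hu hv =>
    simp only [pev] at hu hv ⊢
    rw [map_add, HahnSeries.coeff_add, hu, hv]
    split_ifs <;> simp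
  | monomial n a =>
    rw [pev_monomial, coeff_single, coeff_monomial]
    split_ifs <;> first | rfl | omega

theorem pev_ne_zero {q : F[X]} (hq : q ≠ 0) : pev q ≠ 0 := by
  intro h
  have hlead := coeff_pev q (-q.natDegree)
  rw [h, if_pos (by omega), neg_neg, Int.toNat_natCast] at hlead
  exact leadingCoeff_ne_zero.2 hq hlead.symm

theorem le_orderTop_pev (p : F[X]) : ((-p.natDegree : ℤ) : WithTop ℤ) ≤ (pev p).orderTop :=
  le_orderTop_iff_forall.2 fun j hj => by
    rw [WithTop.coe_lt_coe] at hj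
    rw [coeff_pev, if_pos (by omega)]
    exact coeff_eq_zero_of_natDegree_lt (by omega)

theorem degB_lt_iff (g : LaurentSeries F) (n : ℤ) :
    degB g < n ↔ ((-n : ℤ) : WithTop ℤ) < g.orderTop := by
  unfold degB
  split_ifs with hg
  · simp only [hg, orderTop_zero]
    exact iff_of_true (WithBot.bot_lt_coe n) (WithTop.coe_lt_top _)
  · rw [orderTop_of_ne_zero hg, ← order_of_ne hg, WithBot.coe_lt_coe, WithTop.coe_lt_coe]
    omega

/-- The polynomials in `x`: series with no positive powers of `T = x⁻¹`. -/
def polySubring : Subring (LaurentSeries F) where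
  carrier := {g | ∀ i, 0 < i → g.coeff i = 0}
  mul_mem' {u v} hu hv i hi := by
    rw [HahnSeries.coeff_mul]
    refine Finset.sum_eq_zero fun jk hjk => ?_
    rw [Finset.mem_antidiagonal] at hjk
    rcases lt_or_ge 0 jk.1 with hj | hj
    · rw [hu _ hj, zero_mul]
    · rw [hv _ (by omega), mul_zero]
  one_mem' i hi := by rw [HahnSeries.coeff_one, if_neg hi.ne']
  add_mem' hu hv i hi := by rw [HahnSeries.coeff_add, hu i hi, hv i hi, add_zero]
  zero_mem' _ _ := rfl
  neg_mem' hu i hi := by rw [HahnSeries.coeff_neg, hu i hi, neg_zero]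

theorem pev_mem_polySubring (p : F[X]) : pev p ∈ polySubring := fun i hi => by
  rw [coeff_pev, if_neg hi.not_ge]

theorem eq_zero_of_mem_polySubring {g : LaurentSeries F} (hg : g ∈ polySubring)
    (hpos : 0 < g.orderTop) : g = 0 := by
  ext i
  rcases lt_or_ge 0 i with hi | hi
  · exact hg i hi
  · exact coeff_eq_zero_of_lt_orderTop (lt_of_le_of_lt (WithTop.coe_le_coe.2 hi) hpos)

theorem coeff_polyPart (g : LaurentSeries F) (i : ℤ) :
    (polyPart g).coeff i = if i ≤ 0 then g.coeff i else 0 := by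
  rw [polyPart, HahnSeries.coeff_sum]
  simp only [coeff_single]
  convert Finset.sum_ite_eq (Finset.Icc g.order 0) i g.coeff using 1
  · congr!
  simp only [Finset.mem_Icc]
  split_ifs <;> first | rfl | omega | skip
  exact coeff_eq_zero_of_lt_order (by omega)

theorem polyPart_mem_polySubring (g : LaurentSeries F) : polyPart g ∈ polySubring :=
  fun i hi => by rw [coeff_polyPart, if_neg hi.not_ge]

theorem one_le_orderTop_sub_polyPart (g : LaurentSeries F) :
    ((1 : ℤ) : WithTop ℤ) ≤ (g - polyPart g).orderTop :=
  le_orderTop_iff_forall.2 fun j hj => by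
    rw [WithTop.coe_lt_coe] at hj
    rw [HahnSeries.coeff_sub, coeff_polyPart, if_pos (by omega), sub_self]

theorem orderTop_polyPart {g : LaurentSeries F} (hg : g.orderTop ≤ 0) :
    (polyPart g).orderTop = g.orderTop := by
  have hfrac : g.orderTop < (g - polyPart g).orderTop :=
    hg.trans_lt (lt_of_lt_of_le (by simp) (one_le_orderTop_sub_polyPart g))
  rw [← orderTop_sub hfrac, sub_sub_cancel]

theorem mul_eq_mul_of_orderTop_lt {f P Q p q : LaurentSeries F} (hP : P ∈ polySubring)
    (hQ : Q ∈ polySubring) (hp : p ∈ polySubring) (hq : q ∈ polySubring) {N : ℤ}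
    (hQdeg : ((-N : ℤ) : WithTop ℤ) ≤ Q.orderTop)
    (hqdeg : ((-N : ℤ) : WithTop ℤ) ≤ q.orderTop)
    (hQerr : (N : WithTop ℤ) < (Q * f - P).orderTop)
    (hqerr : (N : WithTop ℤ) < (q * f - p).orderTop) :
    q * P = p * Q := by
  have h₁ : 0 < (Q * (q * f - p)).orderTop := by
    simpa only [neg_add_cancel, WithTop.coe_zero] using lt_orderTop_mul hQdeg hqerr
  have h₂ : 0 < (q * (Q * f - P)).orderTop := by
    simpa only [neg_add_cancel, WithTop.coe_zero] using lt_orderTop_mul hqdeg hQerr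
  have hdiff : q * P - p * Q = Q * (q * f - p) - q * (Q * f - P) := by ring
  refine sub_eq_zero.1 (eq_zero_of_mem_polySubring
    (sub_mem (mul_mem hq hP) (mul_mem hp hQ)) ?_)
  rw [hdiff]
  exact (lt_min h₁ h₂).trans_le min_orderTop_le_orderTop_sub

section ContinuedFraction

variable (f : LaurentSeries F)

def cfFrac (n : ℕ) : LaurentSeries F := cfTail f n - cfA f n

def cfErr (n : ℕ) : LaurentSeries F := cfQ f n * f - cfP f n

theorem cfTail_succ (n : ℕ) : cfTail f (n + 1) = (cfFrac f n)⁻¹ := rfl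

theorem cfP_mem_polySubring : ∀ n, cfP f n ∈ polySubring
  | 0 => one_mem _
  | 1 => polyPart_mem_polySubring _
  | n + 2 => add_mem (mul_mem (polyPart_mem_polySubring _) (cfP_mem_polySubring (n + 1)))
      (cfP_mem_polySubring n)

theorem cfQ_mem_polySubring : ∀ n, cfQ f n ∈ polySubring
  | 0 => zero_mem _
  | 1 => one_mem _
  | n + 2 => add_mem (mul_mem (polyPart_mem_polySubring _) (cfQ_mem_polySubring (n + 1)))
      (cfQ_mem_polySubring n)

theorem one_le_orderTop_cfFrac (n : ℕ) : ((1 : ℤ) : WithTop ℤ) ≤ (cfFrac f n).orderTop :=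
  one_le_orderTop_sub_polyPart _

theorem orderTop_cfA_succ_add {n : ℕ} (h : cfFrac f n ≠ 0) :
    (cfA f (n + 1)).orderTop + (cfFrac f n).orderTop = 0 := by
  have htail : (cfTail f (n + 1)).orderTop + (cfFrac f n).orderTop = 0 := by
    rw [← orderTop_mul, cfTail_succ, inv_mul_cancel₀ h, orderTop_one]
  have hnonpos : (cfTail f (n + 1)).orderTop ≤ 0 :=
    le_of_add_le_of_nonneg_left htail.le (le_trans (by norm_num) (one_le_orderTop_cfFrac f n))
  rw [cfA, orderTop_polyPart hnonpos, htail]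

theorem cfErr_succ {n : ℕ} (h : ∀ k < n, cfFrac f k ≠ 0) :
    cfErr f (n + 1) = -(cfFrac f n * cfErr f n) := by
  induction n with
  | zero => simp only [cfErr, cfFrac, cfP, cfQ, cfTail]; ring
  | succ m ih =>
    have hinv : cfTail f (m + 1) * cfFrac f m = 1 := by
      rw [cfTail_succ, inv_mul_cancel₀ (h m m.lt_succ_self)]
    have ih' := ih fun k hk => h k (hk.trans m.lt_succ_self)
    simp only [cfErr, cfFrac, cfP, cfQ] at ih' hinv ⊢
    linear_combination cfTail f (m + 1) * ih' - (cfQ f m * f - cfP f m) * hinv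

theorem natCast_le_orderTop_cfErr {n : ℕ} (h : ∀ k < n, cfFrac f k ≠ 0) :
    ((n : ℤ) : WithTop ℤ) ≤ (cfErr f n).orderTop := by
  induction n with
  | zero => simp [cfErr, cfP, cfQ]
  | succ m ih =>
    rw [cfErr_succ f fun k hk => h k (hk.trans m.lt_succ_self), orderTop_neg]
    calc (((m + 1 : ℕ) : ℤ) : WithTop ℤ)
      _ = ((1 : ℤ) : WithTop ℤ) + ((m : ℤ) : WithTop ℤ) := by push_cast; rw [add_comm]
      _ ≤ (cfFrac f m).orderTop + (cfErr f m).orderTop :=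
          add_le_add (one_le_orderTop_cfFrac f m) (ih fun k hk => h k (hk.trans m.lt_succ_self))
      _ ≤ _ := orderTop_add_le_mul

theorem orderTop_cfQ_add_two {n : ℕ} (hfrac : cfFrac f n ≠ 0)
    (hlt : (cfQ f (n + 1)).orderTop < (cfQ f n).orderTop) :
    (cfQ f (n + 2)).orderTop = (cfA f (n + 1)).orderTop + (cfQ f (n + 1)).orderTop ∧
      (cfQ f (n + 2)).orderTop < (cfQ f (n + 1)).orderTop := by
  have hA : (cfA f (n + 1)).orderTop < 0 := by
    by_contra! hA
    have := add_le_add hA (one_le_orderTop_cfFrac f n)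
    rw [orderTop_cfA_succ_add f hfrac, zero_add] at this
    exact absurd this (by norm_num)
  have hdrop :
      (cfA f (n + 1)).orderTop + (cfQ f (n + 1)).orderTop < (cfQ f (n + 1)).orderTop := by
    simpa using WithTop.add_lt_add_right hlt.ne_top hA
  have hQ : (cfQ f (n + 2)).orderTop = (cfA f (n + 1)).orderTop + (cfQ f (n + 1)).orderTop := by
    rw [show cfQ f (n + 2) = cfA f (n + 1) * cfQ f (n + 1) + cfQ f n from rfl,
      orderTop_add_eq_left (by rw [orderTop_mul]; exact hdrop.trans hlt), orderTop_mul]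
  exact ⟨hQ, hQ ▸ hdrop⟩

theorem orderTop_cfQ_succ_lt : ∀ {n : ℕ}, (∀ k < n, cfFrac f k ≠ 0) →
    (cfQ f (n + 1)).orderTop < (cfQ f n).orderTop
  | 0, _ => by simp [cfQ]
  | n + 1, h => (orderTop_cfQ_add_two f (h n n.lt_succ_self)
      (orderTop_cfQ_succ_lt fun k hk => h k (hk.trans n.lt_succ_self))).2

theorem orderTop_cfErr_add_orderTop_cfQ {n : ℕ} (h : ∀ k < n, cfFrac f k ≠ 0) :
    (cfErr f n).orderTop + (cfQ f (n + 1)).orderTop = 0 := by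
  induction n with
  | zero => simp [cfErr, cfP, cfQ]
  | succ m ih =>
    have h' : ∀ k < m, cfFrac f k ≠ 0 := fun k hk => h k (hk.trans m.lt_succ_self)
    have hm : cfFrac f m ≠ 0 := h m m.lt_succ_self
    rw [cfErr_succ f h', orderTop_neg, orderTop_mul,
      (orderTop_cfQ_add_two f hm (orderTop_cfQ_succ_lt f h')).1]
    calc _ = ((cfA f (m + 1)).orderTop + (cfFrac f m).orderTop)
          + ((cfErr f m).orderTop + (cfQ f (m + 1)).orderTop) := by abel
      _ = 0 := by rw [orderTop_cfA_succ_add f hm, ih h', add_zero]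

theorem exists_convergent_orderTop_cfErr_gt (N : ℕ) :
    ∃ n, cfQ f (n + 1) ≠ 0 ∧ ((-N : ℤ) : WithTop ℤ) ≤ (cfQ f (n + 1)).orderTop ∧
      ((N : ℤ) : WithTop ℤ) < (cfErr f (n + 1)).orderTop := by
  set stops : ℕ → Prop := fun n ↦
    cfFrac f n = 0 ∨ ((N : ℤ) : WithTop ℤ) < (cfErr f (n + 1)).orderTop
  have hex : ∃ n, stops n := by
    by_cases hnd : ∀ k < N + 1, cfFrac f k ≠ 0
    · exact ⟨N, Or.inr <| (WithTop.coe_lt_coe.2 (by omega)).trans_le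
        (natCast_le_orderTop_cfErr f hnd)⟩
    · push Not at hnd
      obtain ⟨k, -, hk⟩ := hnd
      exact ⟨k, Or.inl hk⟩
  obtain ⟨n, hn, hmin⟩ : ∃ n, stops n ∧ ∀ k < n, ¬stops k :=
    ⟨Nat.find hex, Nat.find_spec hex, fun k hk => Nat.find_min hex hk⟩
  have hnd : ∀ k < n, cfFrac f k ≠ 0 := fun k hk h0 => hmin k hk (Or.inl h0)
  have herr : ((N : ℤ) : WithTop ℤ) < (cfErr f (n + 1)).orderTop := by
    rcases hn with h0 | hlt
    · rw [cfErr_succ f hnd, h0, zero_mul, neg_zero, orderTop_zero]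
      exact WithTop.coe_lt_top _
    · exact hlt
  have herr_prev : (cfErr f n).orderTop ≤ ((N : ℤ) : WithTop ℤ) := by
    cases n with
    | zero => simp [cfErr, cfP, cfQ]
    | succ m => exact not_lt.1 fun hlt => hmin m m.lt_succ_self (Or.inr hlt)
  refine ⟨n, orderTop_ne_top.1 (orderTop_cfQ_succ_lt f hnd).ne_top, ?_, herr⟩
  by_contra! hQ
  have hneg := WithTop.add_lt_add_of_le_of_lt (ne_top_of_le_ne_top WithTop.coe_ne_top herr_prev)
    herr_prev hQ
  rw [orderTop_cfErr_add_orderTop_cfQ f hnd, ← WithTop.coe_add, add_neg_cancel] at hneg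
  exact lt_irrefl _ hneg

end ContinuedFraction

theorem legendre_laurent_general (f : LaurentSeries F) (p q : Polynomial F) (hq : q ≠ 0)
    (happ : degB (f - pev p / pev q) < (((-(2 * (q.natDegree : ℤ))) : ℤ) : WithBot ℤ)) :
    ∃ n : ℕ, pev p / pev q = cfP f (n + 1) / cfQ f (n + 1) := by
  obtain ⟨n, hQ, hQdeg, hQerr⟩ := exists_convergent_orderTop_cfErr_gt f q.natDegree
  have hqerr : ((q.natDegree : ℤ) : WithTop ℤ) < (pev q * f - pev p).orderTop := by
    have hfac : pev q * f - pev p = pev q * (f - pev p / pev q) := by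
      field_simp [pev_ne_zero hq]
    rw [hfac]
    convert lt_orderTop_mul (le_orderTop_pev q) ((degB_lt_iff _ _).1 happ) using 2
    ring
  have hcross := mul_eq_mul_of_orderTop_lt (cfP_mem_polySubring f (n + 1))
    (cfQ_mem_polySubring f (n + 1)) (pev_mem_polySubring p) (pev_mem_polySubring q)
    hQdeg (le_orderTop_pev q) hQerr hqerr
  exact ⟨n, (div_eq_div_iff (pev_ne_zero hq) hQ).2 (by linear_combination -hcross)⟩

/-- **Legendre's theorem for Laurent series.** If `p/q` is in reduced form,
`q ≠ 0`, and `‖f - p/q‖ < -2‖q‖`, then `p/q` is a convergent of the continued fraction of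
`f`. -/
theorem legendre_laurent (f : LaurentSeries F) (p q : Polynomial F) (hq : q ≠ 0)
    (hred : IsCoprime p q)
    (happ : degB (f - pev p / pev q) < (((-(2 * (q.natDegree : ℤ))) : ℤ) : WithBot ℤ)) :
    ∃ n : ℕ, pev p / pev q = cfP f (n + 1) / cfQ f (n + 1) :=
  legendre_laurent_general f p q hq happ
end
end

section
/- Let u ∈ F and g_u(x) = x^{-1} ∏_{t=0}^∞ (1 + u x^{-2^t}). Then (x+u)(x^2+u)/(x^4-u) is a convergent of g_u: namely ||g_u(x) - (x+u)(x^2+u)/(x^4-u)|| ≤ -9. -/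
open Polynomial
open scoped Classical

noncomputable section

variable {F : Type*} [Field F] [CharZero F]

/-- The infinite product `∏_{t=0}^∞ P(T^{d^t})` (with `T = x⁻¹`), defined coefficientwise
via the stabilizing finite truncated products (valid when `P(0) = 1`). -/
def infProd (P : Polynomial F) (d : ℕ) : PowerSeries F :=
  PowerSeries.mk fun n => (∏ t ∈ Finset.range (n + 1), P.comp (Polynomial.X ^ d ^ t)).coeff n

/-- `g_u(x) = x⁻¹ ∏_{t=0}^∞ (1 + u x^{-2^t})`. -/
def gU (u : F) : LaurentSeries F :=
  (xx : LaurentSeries F)⁻¹ *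
    ((infProd (1 + Polynomial.C u * Polynomial.X) 2 : PowerSeries F) : LaurentSeries F)

/-! With `T = x⁻¹`, `g_u = T·P(T)` for the power series `P = ∏ₜ (1 + u T^{2^t})`, and
`(x+u)(x²+u)/(x⁴-u) = T·Q/R` with `Q = (1+uT)(1+uT²)` and `R = 1 - uT⁴`. Since the factors
with `t ≥ 3` are `≡ 1 mod T⁸`, `P ≡ Q·(1+uT⁴) mod T⁸`, hence `P·R ≡ Q·(1-u²T⁸) ≡ Q mod T⁸`.
As `R` is a unit of `F⟦T⟧`, `g_u - T·Q/R = T·(P·R - Q)/R` is divisible by `T⁹`. -/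

theorem coeff_prod_range_comp_X_pow_of_lt_pow {R : Type*} [CommSemiring R] {P : R[X]}
    (hP : P.coeff 0 = 1) {d : ℕ} (hd : 0 < d) {n k m : ℕ} (hn : n < d ^ k) (hkm : k ≤ m) :
    (∏ t ∈ Finset.range m, P.comp (X ^ d ^ t)).coeff n =
      (∏ t ∈ Finset.range k, P.comp (X ^ d ^ t)).coeff n := by
  induction m, hkm using Nat.le_induction with
  | base => rfl
  | succ m hkm ih =>
    have hcomp : P.comp (X ^ d ^ m) = 1 + X ^ d ^ m * P.divX.comp (X ^ d ^ m) := by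
      conv_lhs => rw [← X_mul_divX_add P, hP]
      simp [add_comm]
    have hnm : ¬ d ^ m ≤ n := not_le.2 (hn.trans_le (Nat.pow_le_pow_right hd hkm))
    rw [Finset.prod_range_succ, hcomp, mul_add, mul_one, coeff_add, mul_left_comm,
      coeff_X_pow_mul', if_neg hnm, add_zero, ih]

section

variable {K : Type*} [Field K]

theorem coeff_infProd (P : K[X]) (hP : P.coeff 0 = 1) {d : ℕ} (hd : 0 < d) {n k : ℕ}
    (hn : n < d ^ k) :
    PowerSeries.coeff n (infProd P d) = (∏ t ∈ Finset.range k, P.comp (X ^ d ^ t)).coeff n := by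
  have hn' : n < d ^ (n + 1) := by
    rcases Nat.lt_or_ge 1 d with hd1 | hd1
    · exact (Nat.lt_pow_self hd1).trans (Nat.pow_lt_pow_right hd1 n.lt_succ_self)
    · obtain rfl : d = 1 := by omega
      simpa using hn
  rw [infProd, PowerSeries.coeff_mk]
  rcases le_total k (n + 1) with h | h
  · exact coeff_prod_range_comp_X_pow_of_lt_pow hP hd hn h
  · exact (coeff_prod_range_comp_X_pow_of_lt_pow hP hd hn' h).symm

theorem X_pow_dvd_infProd_sub (P : K[X]) (hP : P.coeff 0 = 1) {d : ℕ} (hd : 0 < d) (k : ℕ) :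
    PowerSeries.X ^ d ^ k ∣
      infProd P d - ((∏ t ∈ Finset.range k, P.comp (X ^ d ^ t) : K[X]) : PowerSeries K) :=
  PowerSeries.X_pow_dvd_iff.2 fun n hn => by
    rw [map_sub, coeff_infProd P hP hd hn, Polynomial.coeff_coe, sub_self]

theorem X_pow_eight_dvd_infProd_mul_sub (u : K) :
    PowerSeries.X ^ 8 ∣ infProd (1 + C u * X) 2 * (1 - PowerSeries.C u * PowerSeries.X ^ 4) -
      (1 + PowerSeries.C u * PowerSeries.X) * (1 + PowerSeries.C u * PowerSeries.X ^ 2) := by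
  obtain ⟨H, hH⟩ := X_pow_dvd_infProd_sub (1 + C u * X) (by simp) two_pos 3
  simp only [add_comp, one_comp, mul_comp, C_comp, X_comp, Finset.prod_range_succ,
    Finset.range_one, Finset.prod_singleton, pow_zero, pow_one, Nat.reducePow, coe_mul, coe_add,
    coe_one, coe_C, coe_X, coe_pow] at hH
  refine ⟨H * (1 - PowerSeries.C u * PowerSeries.X ^ 4) -
    PowerSeries.C u ^ 2 * (1 + PowerSeries.C u * PowerSeries.X) *
      (1 + PowerSeries.C u * PowerSeries.X ^ 2), ?_⟩
  linear_combination (1 - PowerSeries.C u * PowerSeries.X ^ 4) * hH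

theorem degB_coe_le_of_X_pow_dvd {f : PowerSeries K} {n : ℕ} (h : PowerSeries.X ^ n ∣ f) :
    degB (f : LaurentSeries K) ≤ ((-n : ℤ) : WithBot ℤ) := by
  unfold degB
  split_ifs with hf
  · exact bot_le
  have hord : (n : ℤ) ≤ (f : LaurentSeries K).order :=
    (HahnSeries.le_order_iff_forall hf).2 fun j hj => by
      rw [PowerSeries.coeff_coe]
      split_ifs
      · rfl
      · exact PowerSeries.X_pow_dvd_iff.1 h _ (by omega)
  exact_mod_cast neg_le_neg hord

theorem degB_coe_sub_coe_div_le {P Q R : PowerSeries K} {n : ℕ}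
    (h : PowerSeries.X ^ n ∣ P * R - Q) (hR : PowerSeries.constantCoeff R ≠ 0) :
    degB ((P : LaurentSeries K) - (Q : LaurentSeries K) / (R : LaurentSeries K)) ≤
      ((-n : ℤ) : WithBot ℤ) := by
  have hRinv : (R : LaurentSeries K) * (R⁻¹ : PowerSeries K) = 1 := by
    rw [← PowerSeries.coe_mul, PowerSeries.mul_inv_cancel R hR, PowerSeries.coe_one]
  have hR0 : (R : LaurentSeries K) ≠ 0 := left_ne_zero_of_mul_eq_one hRinv
  have : (P : LaurentSeries K) - (Q : LaurentSeries K) / (R : LaurentSeries K) =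
      ((P * R - Q) * R⁻¹ : PowerSeries K) := by
    rw [PowerSeries.coe_mul, eq_inv_of_mul_eq_one_right hRinv]
    push_cast
    field_simp
  rw [this]
  exact degB_coe_le_of_X_pow_dvd (dvd_mul_of_dvd_left h _)

theorem pev_fourth_convergent_eq (u : K) :
    pev ((X + C u) * (X ^ 2 + C u)) / pev (X ^ 4 - C u) =
      ((PowerSeries.X * ((1 + PowerSeries.C u * PowerSeries.X) *
          (1 + PowerSeries.C u * PowerSeries.X ^ 2)) : PowerSeries K) : LaurentSeries K) /
        ((1 - PowerSeries.C u * PowerSeries.X ^ 4 : PowerSeries K) : LaurentSeries K) := by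
  have hT : ((PowerSeries.X : PowerSeries K) : LaurentSeries K) ≠ 0 := by simp
  simp only [pev, xx, map_mul, map_add, map_sub, map_pow, aeval_X, aeval_C,
    LaurentSeries.algebraMap_apply, ← PowerSeries.coe_C]
  push_cast
  field_simp

end

/-- `(x+u)(x²+u)/(x⁴-u)` is a convergent of `g_u`:
`‖g_u(x) - (x+u)(x²+u)/(x⁴-u)‖ ≤ -9`. -/
theorem fourth_convergent_gU (u : F) :
    degB (gU u -
        pev ((Polynomial.X + Polynomial.C u) * (Polynomial.X ^ 2 + Polynomial.C u)) /
          pev (Polynomial.X ^ 4 - Polynomial.C u)) ≤ (((-9 : ℤ)) : WithBot ℤ) := by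
  have hgU : gU u =
      ((PowerSeries.X * infProd (1 + C u * X) 2 : PowerSeries F) : LaurentSeries F) := by
    rw [gU, xx, inv_inv, PowerSeries.coe_mul]
  rw [hgU, pev_fourth_convergent_eq]
  refine degB_coe_sub_coe_div_le (n := 9) ?_ (by simp)
  rw [pow_succ', mul_assoc, ← mul_sub]
  exact mul_dvd_mul_left _ (X_pow_eight_dvd_infProd_mul_sub u)

end
end

section
/- Define sequences α_n, β_n by α_{2k+1} = -u, α_{2k+2} = u for all k ≥ 0, β_1 = 1, β_2 = u^2 - u, β_{2k+3} = -β_{k+2}/β_{2k+2}, β_{2k+4} = α_{k+2} + u^2 - β_{2k+3}. For n ≥ 3, β_n(u) is a rational function of u that can be written as e_n(u)/d_n(u) where e_n, d_n ∈ ℤ[u] and both the leading coefficients and the constant coefficients of e_n and d_n equal ±1. Moreover deg e_{2k} = deg d_{2k} + 2 and deg e_{2k+1} ≤ deg d_{2k+1}. -/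
open Polynomial

noncomputable section

/-- `α_n ∈ ℚ(u)`: `α_{2k+1} = -u`, `α_{2k+2} = u` (here `u = RatFunc.X`). -/
def alphaU (n : ℕ) : RatFunc ℚ := if n % 2 = 1 then -RatFunc.X else RatFunc.X

/-- `β_n ∈ ℚ(u)` defined by `β_1 = 1`, `β_2 = u² - u`,
`β_{2k+3} = -β_{k+2}/β_{2k+2}`, `β_{2k+4} = α_{k+2} + u² - β_{2k+3}`. -/
def betaU : ℕ → RatFunc ℚ
  | 0 => 0
  | 1 => 1
  | 2 => RatFunc.X ^ 2 - RatFunc.X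
  | n + 3 =>
    if n % 2 = 0 then -betaU (n / 2 + 2) / betaU (n + 2)
    else alphaU ((n - 1) / 2 + 2) + RatFunc.X ^ 2 - betaU (n + 2)

/-- The canonical map `ℤ[u] → ℚ(u)`. -/
def MZ : Polynomial ℤ →+* RatFunc ℚ :=
  (algebraMap (Polynomial ℚ) (RatFunc ℚ)).comp (mapRingHom (Int.castRingHom ℚ))

lemma MZ_apply (p : Polynomial ℤ) :
    MZ p = algebraMap (Polynomial ℚ) (RatFunc ℚ) (p.map (Int.castRingHom ℚ)) := rfl

lemma MZ_injective : Function.Injective MZ :=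
  (RatFunc.algebraMap_injective ℚ).comp
    (Polynomial.map_injective _ Int.cast_injective)

lemma MZ_ne_zero {p : Polynomial ℤ} (hp : p ≠ 0) : MZ p ≠ 0 := by
  intro h
  exact hp (MZ_injective (by simpa using h))

lemma MZ_X : MZ Polynomial.X = RatFunc.X := by
  rw [MZ_apply, Polynomial.map_X, RatFunc.algebraMap_X]

lemma pm_mul {a b : ℤ} (ha : a = 1 ∨ a = -1) (hb : b = 1 ∨ b = -1) :
    a * b = 1 ∨ a * b = -1 := by
  rcases ha with h | h <;> rcases hb with h' | h' <;> simp [h, h']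

lemma pm_ne_zero {a : ℤ} (ha : a = 1 ∨ a = -1) : a ≠ 0 := by
  rcases ha with h | h <;> simp [h]

lemma betaU_odd_rec (k : ℕ) : betaU (2 * k + 3) = -betaU (k + 2) / betaU (2 * k + 2) := by
  show betaU ((2 * k) + 3) = _
  rw [betaU, if_pos (by omega)]
  simp only [show 2 * k / 2 = k from by omega]

lemma betaU_even_rec (k : ℕ) :
    betaU (2 * k + 4) = alphaU (k + 2) + RatFunc.X ^ 2 - betaU (2 * k + 3) := by
  show betaU ((2 * k + 1) + 3) = _
  rw [betaU, if_neg (by omega)]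
  simp only [show (2 * k + 1 - 1) / 2 = k from by omega,
    show 2 * k + 1 + 2 = 2 * k + 3 from by omega]

lemma betaU_key : ∀ n : ℕ, 3 ≤ n →
    ∃ e d : Polynomial ℤ,
      (e.leadingCoeff = 1 ∨ e.leadingCoeff = -1) ∧
      (e.coeff 0 = 1 ∨ e.coeff 0 = -1) ∧
      (d.leadingCoeff = 1 ∨ d.leadingCoeff = -1) ∧
      (d.coeff 0 = 1 ∨ d.coeff 0 = -1) ∧
      betaU n = MZ e / MZ d ∧
      (Even n → e.natDegree = d.natDegree + 2) ∧
      (Odd n → e.natDegree ≤ d.natDegree) := by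
  intro n
  induction n using Nat.strong_induction_on with
  | _ n ih =>
  intro hn
  obtain ⟨m, rfl⟩ : ∃ m, n = m + 3 := ⟨n - 3, by omega⟩
  have hsplit : m = 0 ∨ (∃ j, m = 2 * j + 1) ∨ (∃ j, m = 2 * j + 2) := by
    rcases Nat.even_or_odd m with ⟨j, hj⟩ | ⟨j, hj⟩
    · rcases Nat.eq_zero_or_pos j with h | h
      · left; omega
      · right; right; exact ⟨j - 1, by omega⟩
    · right; left; exact ⟨j, by omega⟩
  rcases hsplit with rfl | ⟨j, rfl⟩ | ⟨j, rfl⟩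
  · -- n = 3 : betaU 3 = -1
    refine ⟨-1, 1, ?_, ?_, ?_, ?_, ?_, ?_, ?_⟩
    · right; simp
    · right; simp
    · left; simp
    · left; simp
    · have h2eq : betaU 2 = RatFunc.X ^ 2 - RatFunc.X := by simp [betaU]
      have h2 : betaU 2 ≠ 0 := by
        rw [h2eq]
        rw [← RatFunc.algebraMap_X, ← map_pow, ← map_sub]
        exact RatFunc.algebraMap_ne_zero (by
          intro h
          have := congrArg (fun p => Polynomial.coeff p 1) h
          simp at this)
      have h3 : betaU 3 = -betaU 2 / betaU 2 := by
        have := betaU_odd_rec 0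
        norm_num at this
        exact this
      rw [h3, neg_div, div_self h2]
      simp [MZ_apply]
    · intro h; rw [Nat.even_iff] at h; omega
    · intro _; simp
  · -- n = 2j+4, even case
    obtain ⟨e₁, d₁, he₁l, he₁c, hd₁l, hd₁c, hval, _, hdeg⟩ :=
      ih (2 * j + 3) (by omega) (by omega)
    have hdeg1 : e₁.natDegree ≤ d₁.natDegree := hdeg ⟨j + 1, by ring⟩
    have he₁ne : e₁ ≠ 0 := leadingCoeff_ne_zero.mp (pm_ne_zero he₁l)
    have hd₁ne : d₁ ≠ 0 := leadingCoeff_ne_zero.mp (pm_ne_zero hd₁l)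
    set a : ℤ := if (j + 2) % 2 = 1 then -1 else 1 with ha_def
    set q : Polynomial ℤ := X ^ 2 + C a * X with hq_def
    have hqn : q.natDegree = 2 := by
      rw [hq_def]
      compute_degree!
    have hqm : q.Monic := by
      rw [hq_def]
      monicity!
    have hq0 : q.coeff 0 = 0 := by simp [hq_def]
    have hqne : q ≠ 0 := hqm.ne_zero
    have hqd : (q * d₁).natDegree = d₁.natDegree + 2 := by
      rw [natDegree_mul hqne hd₁ne, hqn]; ring
    have hlt : e₁.natDegree < (q * d₁).natDegree := by
      rw [hqd]; omega
    refine ⟨q * d₁ - e₁, d₁, ?_, ?_, hd₁l, hd₁c, ?_, ?_, ?_⟩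
    · -- leading coeff
      have hnd := natDegree_sub_eq_left_of_natDegree_lt hlt
      have : (q * d₁ - e₁).leadingCoeff = (q * d₁).leadingCoeff := by
        rw [leadingCoeff, hnd, coeff_sub,
          coeff_eq_zero_of_natDegree_lt hlt, sub_zero, ← leadingCoeff]
      rw [this, leadingCoeff_mul, hqm.leadingCoeff, one_mul]
      exact hd₁l
    · -- constant coeff
      rw [coeff_sub, mul_coeff_zero, hq0, zero_mul, zero_sub]
      rcases he₁c with h | h <;> simp [h]
    · -- value
      have hrec : betaU (2 * j + 1 + 3) =
          alphaU (j + 2) + RatFunc.X ^ 2 - betaU (2 * j + 3) := betaU_even_rec j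
      have hMq : MZ q = alphaU (j + 2) + RatFunc.X ^ 2 := by
        rw [hq_def, map_add, map_mul, map_pow, MZ_X]
        unfold alphaU
        rw [ha_def]
        split_ifs with h
        · simp [MZ_apply]; ring
        · simp [MZ_apply]; ring
      have hMd₁ : MZ d₁ ≠ 0 := MZ_ne_zero hd₁ne
      rw [hrec, hval, ← hMq, map_sub, map_mul, sub_div,
        mul_div_cancel_right₀ _ hMd₁]
    · intro _
      exact natDegree_sub_eq_left_of_natDegree_lt hlt ▸ hqd ▸ rfl
    · intro h; rw [Nat.odd_iff] at h; omega
  · -- n = 2j+5, odd case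
    obtain ⟨e₁, d₁, he₁l, he₁c, hd₁l, hd₁c, hval₁, heven₁, hodd₁⟩ :=
      ih (j + 3) (by omega) (by omega)
    obtain ⟨e₂, d₂, he₂l, he₂c, hd₂l, hd₂c, hval₂, heven₂, _⟩ :=
      ih (2 * j + 4) (by omega) (by omega)
    have hdeg2 : e₂.natDegree = d₂.natDegree + 2 := heven₂ ⟨j + 2, by ring⟩
    have he₁ne : e₁ ≠ 0 := leadingCoeff_ne_zero.mp (pm_ne_zero he₁l)
    have hd₁ne : d₁ ≠ 0 := leadingCoeff_ne_zero.mp (pm_ne_zero hd₁l)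
    have he₂ne : e₂ ≠ 0 := leadingCoeff_ne_zero.mp (pm_ne_zero he₂l)
    have hd₂ne : d₂ ≠ 0 := leadingCoeff_ne_zero.mp (pm_ne_zero hd₂l)
    refine ⟨-(e₁ * d₂), d₁ * e₂, ?_, ?_, ?_, ?_, ?_, ?_, ?_⟩
    · rw [leadingCoeff_neg, leadingCoeff_mul]
      rcases pm_mul he₁l hd₂l with h | h <;> simp [h]
    · rw [coeff_neg, mul_coeff_zero]
      rcases pm_mul he₁c hd₂c with h | h <;> simp [h]
    · rw [leadingCoeff_mul]; exact pm_mul hd₁l he₂l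
    · rw [mul_coeff_zero]; exact pm_mul hd₁c he₂c
    · have hrec : betaU (2 * j + 5) = -betaU (j + 3) / betaU (2 * j + 4) := by
        show betaU ((2 * j + 2) + 3) = _
        rw [betaU]
        rw [if_pos (by omega)]
        simp only [show (2 * j + 2) / 2 = j + 1 from by omega,
          show 2 * j + 2 + 2 = 2 * j + 4 from by omega, show j + 1 + 2 = j + 3 from rfl]
      have h1 : MZ e₁ ≠ 0 := MZ_ne_zero he₁ne
      have h2 : MZ d₁ ≠ 0 := MZ_ne_zero hd₁ne
      have h3 : MZ e₂ ≠ 0 := MZ_ne_zero he₂ne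
      have h4 : MZ d₂ ≠ 0 := MZ_ne_zero hd₂ne
      rw [hrec, hval₁, hval₂, map_neg, map_mul, map_mul]
      field_simp
      try ring
    · intro h; rw [Nat.even_iff] at h; omega
    · intro _
      rw [natDegree_neg, natDegree_mul he₁ne hd₂ne, natDegree_mul hd₁ne he₂ne]
      have : e₁.natDegree ≤ d₁.natDegree + 2 := by
        rcases Nat.even_or_odd (j + 3) with h | h
        · have := heven₁ h; omega
        · have := hodd₁ h; omega
      omega

/-- For `n ≥ 3`, `β_n(u) = e_n(u)/d_n(u)` with `e_n, d_n ∈ ℤ[u]` whose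
leading and constant coefficients are `±1`; moreover `deg e_{2k} = deg d_{2k} + 2` and
`deg e_{2k+1} ≤ deg d_{2k+1}`. -/
theorem betaU_num_den (n : ℕ) (hn : 3 ≤ n) :
    ∃ e d : Polynomial ℤ,
      (e.leadingCoeff = 1 ∨ e.leadingCoeff = -1) ∧
      (e.coeff 0 = 1 ∨ e.coeff 0 = -1) ∧
      (d.leadingCoeff = 1 ∨ d.leadingCoeff = -1) ∧
      (d.coeff 0 = 1 ∨ d.coeff 0 = -1) ∧
      betaU n =
        algebraMap (Polynomial ℚ) (RatFunc ℚ) (e.map (Int.castRingHom ℚ)) /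
          algebraMap (Polynomial ℚ) (RatFunc ℚ) (d.map (Int.castRingHom ℚ)) ∧
      (Even n → e.natDegree = d.natDegree + 2) ∧
      (Odd n → e.natDegree ≤ d.natDegree) := by
  obtain ⟨e, d, h1, h2, h3, h4, h5, h6, h7⟩ := betaU_key n hn
  exact ⟨e, d, h1, h2, h3, h4, h5, h6, h7⟩

end
end

section
/- If u ∈ ℚ and β_n(u) = 0 for some n ≥ 3, where β_n is defined by the recursion β_1 = 1, β_2 = u^2-u, β_{2k+3} = -β_{k+2}/β_{2k+2}, β_{2k+4} = α_{k+2} + u^2 - β_{2k+3} with α_{2k+1} = -u, α_{2k+2} = u, then u = 1 or u = -1. -/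
open Polynomial

noncomputable section

/-- The embedding `ℤ[X] → RatFunc ℚ`. -/
def emb : ℤ[X] →+* RatFunc ℚ :=
  (algebraMap ℚ[X] (RatFunc ℚ)).comp (Polynomial.mapRingHom (Int.castRingHom ℚ))

lemma emb_injective : Function.Injective emb :=
  (RatFunc.algebraMap_injective ℚ).comp
    (Polynomial.map_injective _ Int.cast_injective)

lemma emb_ne_zero {p : ℤ[X]} (hp : p ≠ 0) : emb p ≠ 0 := by
  intro h
  exact hp (emb_injective (by simpa using h))

lemma ne_zero_of_coeff0 {p : ℤ[X]} (h : p.coeff 0 = 1 ∨ p.coeff 0 = -1) : p ≠ 0 := by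
  rintro rfl
  simp at h

lemma emb_X : emb X = RatFunc.X := by
  simp [emb, RatFunc.algebraMap_X]

lemma alphaU_eq (k : ℕ) : ∃ a : ℤ[X], (a = X ∨ a = -X) ∧ alphaU k = emb a := by
  unfold alphaU
  split
  · exact ⟨-X, Or.inr rfl, by rw [map_neg, emb_X]⟩
  · exact ⟨X, Or.inl rfl, (emb_X).symm⟩

/-- The key invariant: `betaU n = p/q` with `p, q ∈ ℤ[X]` having leading and constant
coefficients `±1`, and degree control according to the parity of `n`. -/
structure GoodPair (n : ℕ) (p q : ℤ[X]) : Prop where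
  hp0 : p.coeff 0 = 1 ∨ p.coeff 0 = -1
  hpl : p.leadingCoeff = 1 ∨ p.leadingCoeff = -1
  hq0 : q.coeff 0 = 1 ∨ q.coeff 0 = -1
  hql : q.leadingCoeff = 1 ∨ q.leadingCoeff = -1
  hdeg : if n % 2 = 0 then p.natDegree = q.natDegree + 2 else p.natDegree ≤ q.natDegree
  heq : betaU n = emb p / emb q

lemma goodPair_one : GoodPair 1 1 1 := by
  refine ⟨Or.inl coeff_one_zero, Or.inl leadingCoeff_one, Or.inl coeff_one_zero,
    Or.inl leadingCoeff_one, ?_, ?_⟩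
  · norm_num
  · simp [betaU]

lemma betaU_add_three (n : ℕ) : betaU (n + 3)
    = if n % 2 = 0 then -betaU (n / 2 + 2) / betaU (n + 2)
      else alphaU ((n - 1) / 2 + 2) + RatFunc.X ^ 2 - betaU (n + 2) := by
  rw [betaU]

lemma betaU_two : betaU 2 = emb (X ^ 2 - X) := by
  simp [betaU, emb, RatFunc.algebraMap_X]

lemma X_sq_sub_X_ne_zero : (X ^ 2 - X : ℤ[X]) ≠ 0 := by
  intro h
  have := congrArg (fun r => Polynomial.coeff r 2) h
  simp [coeff_X] at this

lemma betaU_three : betaU 3 = -1 := by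
  have h2 : betaU 2 ≠ 0 := by
    rw [betaU_two]
    exact emb_ne_zero X_sq_sub_X_ne_zero
  rw [show (3:ℕ) = 0 + 3 from rfl, betaU_add_three, if_pos rfl]
  norm_num [neg_div, div_self h2]

lemma goodPair_three : GoodPair 3 (-1) 1 := by
  refine ⟨?_, ?_, Or.inl coeff_one_zero, Or.inl leadingCoeff_one, ?_, ?_⟩
  · right; simp
  · right; simp
  · norm_num
  · simp [betaU_three]

lemma betaU_good : ∀ n : ℕ, (n = 1 ∨ 3 ≤ n) → ∃ p q : ℤ[X], GoodPair n p q := by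
  intro n
  induction n using Nat.strong_induction_on with
  | _ n ih =>
    intro hn
    rcases hn with rfl | h3
    · exact ⟨1, 1, goodPair_one⟩
    obtain ⟨m, rfl⟩ : ∃ m, n = m + 3 := ⟨n - 3, by omega⟩
    rcases Nat.eq_zero_or_pos m with rfl | hm
    · exact ⟨-1, 1, goodPair_three⟩
    by_cases hpar : m % 2 = 0
    · -- odd index m+3 : betaU (m+3) = -betaU (m/2+2) / betaU (m+2)
      have hm2 : 2 ≤ m := by omega
      obtain ⟨p₁, q₁, G₁⟩ := ih (m / 2 + 2) (by omega) (Or.inr (by omega))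
      obtain ⟨p₂, q₂, G₂⟩ := ih (m + 2) (by omega) (Or.inr (by omega))
      have hp₁ : p₁ ≠ 0 := ne_zero_of_coeff0 G₁.hp0
      have hq₁ : q₁ ≠ 0 := ne_zero_of_coeff0 G₁.hq0
      have hp₂ : p₂ ≠ 0 := ne_zero_of_coeff0 G₂.hp0
      have hq₂ : q₂ ≠ 0 := ne_zero_of_coeff0 G₂.hq0
      refine ⟨-(p₁ * q₂), q₁ * p₂, ?_, ?_, ?_, ?_, ?_, ?_⟩
      · rw [coeff_neg, mul_coeff_zero]
        rcases G₁.hp0 with h | h <;> rcases G₂.hq0 with h' | h' <;>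
          rw [h, h'] <;> norm_num
      · rw [leadingCoeff_neg, leadingCoeff_mul]
        rcases G₁.hpl with h | h <;> rcases G₂.hql with h' | h' <;>
          rw [h, h'] <;> norm_num
      · rw [mul_coeff_zero]
        rcases G₁.hq0 with h | h <;> rcases G₂.hp0 with h' | h' <;>
          rw [h, h'] <;> norm_num
      · rw [leadingCoeff_mul]
        rcases G₁.hql with h | h <;> rcases G₂.hpl with h' | h' <;>
          rw [h, h'] <;> norm_num
      · rw [if_neg (by omega : ¬ (m + 3) % 2 = 0)]
        have hd₁ : p₁.natDegree ≤ q₁.natDegree + 2 := by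
          have := G₁.hdeg
          split at this <;> omega
        have hd₂ : p₂.natDegree = q₂.natDegree + 2 := by
          have := G₂.hdeg
          rw [if_pos (by omega : (m + 2) % 2 = 0)] at this
          exact this
        simp only [natDegree_neg, natDegree_mul hp₁ hq₂, natDegree_mul hq₁ hp₂]
        omega
      · have hb : betaU (m + 3) = -betaU (m / 2 + 2) / betaU (m + 2) := by
          rw [betaU_add_three, if_pos hpar]
        rw [hb, G₁.heq, G₂.heq, map_neg, map_mul, map_mul]
        have e1 := emb_ne_zero hq₁
        have e2 := emb_ne_zero hq₂
        have e3 := emb_ne_zero hp₂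
        field_simp
        all_goals ring
    · -- even index m+3 : betaU (m+3) = alphaU ((m-1)/2+2) + X^2 - betaU (m+2)
      obtain ⟨p₁, q₁, G₁⟩ := ih (m + 2) (by omega) (Or.inr (by omega))
      have hp₁ : p₁ ≠ 0 := ne_zero_of_coeff0 G₁.hp0
      have hq₁ : q₁ ≠ 0 := ne_zero_of_coeff0 G₁.hq0
      obtain ⟨a, ha, haeq⟩ := alphaU_eq ((m - 1) / 2 + 2)
      set s : ℤ[X] := X ^ 2 + a with hs_def
      have hsmonic : s.Monic := by
        apply monic_X_pow_add
        rcases ha with rfl | rfl <;> simp [degree_X] <;> decide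
      have hs0 : s.coeff 0 = 0 := by
        rcases ha with rfl | rfl <;> simp [hs_def, coeff_X]
      have hsnd : s.natDegree = 2 := by
        have : s.degree = 2 := by
          rw [hs_def]
          rw [degree_add_eq_left_of_degree_lt]
          · exact degree_X_pow 2
          · rw [degree_X_pow]
            rcases ha with rfl | rfl <;> simp [degree_X] <;> decide
        exact natDegree_eq_of_degree_eq_some this
      have hd₁ : p₁.natDegree ≤ q₁.natDegree := by
        have := G₁.hdeg
        rw [if_neg (by omega : ¬ (m + 2) % 2 = 0)] at this
        exact this
      have hsq_nd : (s * q₁).natDegree = q₁.natDegree + 2 := by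
        rw [natDegree_mul hsmonic.ne_zero hq₁, hsnd]; omega
      have hlt : p₁.degree < (s * q₁).degree := by
        calc p₁.degree ≤ (p₁.natDegree : WithBot ℕ) := degree_le_natDegree
          _ < ((s * q₁).natDegree : WithBot ℕ) := by
              rw [Nat.cast_lt, hsq_nd]; omega
          _ = (s * q₁).degree :=
              (degree_eq_natDegree (mul_ne_zero hsmonic.ne_zero hq₁)).symm
      refine ⟨s * q₁ - p₁, q₁, ?_, ?_, G₁.hq0, G₁.hql, ?_, ?_⟩
      · rw [coeff_sub, mul_coeff_zero, hs0, zero_mul, zero_sub]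
        rcases G₁.hp0 with h | h <;> rw [h] <;> norm_num
      · rw [leadingCoeff_sub_of_degree_lt hlt, leadingCoeff_mul, hsmonic.leadingCoeff,
          one_mul]
        exact G₁.hql
      · rw [if_pos (by omega : (m + 3) % 2 = 0)]
        rw [natDegree_sub_eq_left_of_natDegree_lt (by rw [hsq_nd]; omega), hsq_nd]
      · have hb : betaU (m + 3)
            = alphaU ((m - 1) / 2 + 2) + RatFunc.X ^ 2 - betaU (m + 2) := by
          rw [betaU_add_three, if_neg hpar]
        rw [hb, G₁.heq, haeq, map_sub, map_mul, map_add, map_pow, emb_X]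
        have e1 := emb_ne_zero hq₁
        rw [sub_div, mul_div_cancel_right₀ _ e1]
        ring

/-- Rational root theorem specialization: an integer polynomial whose constant and
leading coefficients are `±1` has only `±1` as rational roots. -/
lemma ratroot (p : ℤ[X]) (h0 : p.coeff 0 = 1 ∨ p.coeff 0 = -1)
    (hl : p.leadingCoeff = 1 ∨ p.leadingCoeff = -1) (u : ℚ)
    (hu : Polynomial.aeval u p = 0) : u = 1 ∨ u = -1 := by
  have hnum : IsFractionRing.num ℤ u ∣ p.coeff 0 := num_dvd_of_is_root hu
  have hden : (IsFractionRing.den ℤ u : ℤ) ∣ p.leadingCoeff := den_dvd_of_is_root hu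
  have hnu : IsUnit (IsFractionRing.num ℤ u) := by
    apply isUnit_of_dvd_one
    rcases h0 with h | h <;> rw [h] at hnum
    · exact hnum
    · exact (dvd_neg).mp hnum
  have hdu : IsUnit ((IsFractionRing.den ℤ u : ℤ)) := by
    apply isUnit_of_dvd_one
    rcases hl with h | h <;> rw [h] at hden
    · exact hden
    · exact (dvd_neg).mp hden
  rw [Int.isUnit_iff] at hnu hdu
  have key := IsFractionRing.mk'_num_den' ℤ u
  rcases hnu with h1 | h1 <;> rcases hdu with h2 | h2 <;>
      rw [h1, h2] at key <;> push_cast at key <;> norm_num at key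
  · left; linarith
  · right; linarith
  · right; linarith
  · left; linarith

/-- If `u ∈ ℚ` and `β_n(u) = 0` for some `n ≥ 3`, then `u = 1` or
`u = -1`. -/
theorem betaU_rational_zero (u : ℚ) (n : ℕ) (hn : 3 ≤ n)
    (h : (betaU n).eval (RingHom.id ℚ) u = 0) : u = 1 ∨ u = -1 := by
  obtain ⟨p, q, G⟩ := betaU_good n (Or.inr hn)
  set f := betaU n with hf
  have hpZ : p ≠ 0 := ne_zero_of_coeff0 G.hp0
  have hqZ : q ≠ 0 := ne_zero_of_coeff0 G.hq0
  set p' : ℚ[X] := p.map (Int.castRingHom ℚ) with hp'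
  set q' : ℚ[X] := q.map (Int.castRingHom ℚ) with hq'
  have hp'Z : p' ≠ 0 := fun hc => hpZ (Polynomial.map_injective _ Int.cast_injective
    (by simpa using hc))
  have hq'Z : q' ≠ 0 := fun hc => hqZ (Polynomial.map_injective _ Int.cast_injective
    (by simpa using hc))
  -- cross-multiplied identity in ℚ[X]
  have key : p' * f.denom = f.num * q' := by
    have h1 : algebraMap ℚ[X] (RatFunc ℚ) p' / algebraMap ℚ[X] (RatFunc ℚ) q'
        = algebraMap ℚ[X] (RatFunc ℚ) f.num / algebraMap ℚ[X] (RatFunc ℚ) f.denom := by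
      rw [RatFunc.num_div_denom]
      exact G.heq.symm
    rw [div_eq_div_iff (RatFunc.algebraMap_ne_zero hq'Z)
      (RatFunc.algebraMap_ne_zero f.denom_ne_zero)] at h1
    rw [← map_mul, ← map_mul] at h1
    exact RatFunc.algebraMap_injective ℚ h1
  have keyu : p'.eval u * f.denom.eval u = f.num.eval u * q'.eval u := by
    have := congrArg (Polynomial.eval u) key
    simpa using this
  have heval : f.num.eval u / f.denom.eval u = 0 := h
  have haev : ∀ r : ℤ[X], (r.map (Int.castRingHom ℚ)).eval u = 0 →
      Polynomial.aeval u r = 0 := by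
    intro r hr
    rw [Polynomial.aeval_def, ← Polynomial.eval_map]
    rwa [algebraMap_int_eq]
  by_cases hd : f.denom.eval u = 0
  · -- then the numerator is nonzero at u by coprimality, so q'(u) = 0
    have hnum_ne : f.num.eval u ≠ 0 := by
      intro hne
      obtain ⟨a, b, hab⟩ := RatFunc.isCoprime_num_denom f
      have := congrArg (Polynomial.eval u) hab
      simp [hne, hd] at this
    have hq'u : q'.eval u = 0 := by
      rw [hd, mul_zero] at keyu
      rcases mul_eq_zero.mp keyu.symm with h' | h'
      · exact absurd h' hnum_ne
      · exact h'
    exact ratroot q G.hq0 G.hql u (haev q hq'u)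
  · have hnum0 : f.num.eval u = 0 := by
      rcases div_eq_zero_iff.mp heval with h' | h'
      · exact h'
      · exact absurd h' hd
    have hp'u : p'.eval u = 0 := by
      rw [hnum0, zero_mul] at keyu
      rcases mul_eq_zero.mp keyu with h' | h'
      · exact h'
      · exact absurd h' hd
    exact ratroot p G.hp0 G.hpl u (haev p hp'u)

end
end

section
/- Define sequences (α_n), (β_n) in ℝ by α_1 = -u, α_2 = u(2v-1-u^2)/(v-u^2), α_3 = -u(v-1)/(v-u^2), β_1 = 1, β_2 = u^2-v, β_3 = (u^2+u^4+v^3-3u^2v)/(v-u^2)^2, and for k ≥ 0: α_{3k+4} = -u, β_{3k+4} = β_{k+2}/(β_{3k+3}β_{3k+2}), β_{3k+5} = u^2 - v - β_{3k+4}, α_{3k+5} = u - (α_{k+2} + uv - α_{3k+2}β_{3k+4})/β_{3k+5}, α_{3k+6} = u - α_{3k+5}, β_{3k+6} = v - α_{3k+5}α_{3k+6}. If u, v ∈ ℝ satisfy u > 0, u^2 ≥ 6 and v ≥ max{3u^2 - 1, 2u^2 + 8}, then for all k ≥ 0: 2u ≤ α_{3k+2} ≤ 3u, -2u ≤ α_{3k+3}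 ≤ -u, |β_{3k+1}| ≤ 1, u^2 - v - 1 ≤ β_{3k+2} ≤ u^2 - v + 1, and v + 2u^2 ≤ β_{3k+3} ≤ v + 6u^2. In particular β_n ≠ 0 for all n ≥ 1. -/
noncomputable section

/-- The pair `(α_n, β_n)` of real parameters of the continued fraction of `g_{(u,v)}`
(`d = 3`), defined by the recursion of Theorem 2 of the paper. -/
def abSeq (u v : ℝ) : ℕ → ℝ × ℝ
  | 0 => (0, 0)
  | 1 => (-u, 1)
  | 2 => (u * (2 * v - 1 - u ^ 2) / (v - u ^ 2), u ^ 2 - v)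
  | 3 => (-u * (v - 1) / (v - u ^ 2), (u ^ 2 + u ^ 4 + v ^ 3 - 3 * u ^ 2 * v) / (v - u ^ 2) ^ 2)
  | n + 4 =>
    if n % 3 = 0 then
      -- index 3k+4 with k = n/3
      (-u, (abSeq u v (n / 3 + 2)).2 / ((abSeq u v (n + 3)).2 * (abSeq u v (n + 2)).2))
    else if n % 3 = 1 then
      -- index 3k+5 with k = (n-1)/3
      (u - ((abSeq u v ((n - 1) / 3 + 2)).1 + u * v -
            (abSeq u v (n + 1)).1 * (abSeq u v (n + 3)).2) /
          (u ^ 2 - v - (abSeq u v (n + 3)).2),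
        u ^ 2 - v - (abSeq u v (n + 3)).2)
    else
      -- index 3k+6 with k = (n-2)/3
      (u - (abSeq u v (n + 3)).1,
        v - (abSeq u v (n + 3)).1 * (u - (abSeq u v (n + 3)).1))

lemma abSeq4' (u v : ℝ) (k : ℕ) : abSeq u v (3*k+4) =
    (-u, (abSeq u v (k + 2)).2 / ((abSeq u v (3*k + 3)).2 * (abSeq u v (3*k + 2)).2)) := by
  have h : 3*k+4 = (3*k)+4 := rfl
  rw [h, abSeq]
  simp [Nat.mul_div_cancel_left, Nat.mul_mod_right]

lemma abSeq5' (u v : ℝ) (k : ℕ) : abSeq u v (3*k+5) =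
    (u - ((abSeq u v (k + 2)).1 + u * v -
          (abSeq u v (3*k + 2)).1 * (abSeq u v (3*k + 4)).2) /
        (u ^ 2 - v - (abSeq u v (3*k + 4)).2),
      u ^ 2 - v - (abSeq u v (3*k + 4)).2) := by
  have h : 3*k+5 = (3*k+1)+4 := by omega
  rw [h, abSeq]
  have h1 : (3*k+1) % 3 = 1 := by omega
  have h2 : (3*k+1-1)/3 = k := by omega
  simp [h1, h2]

lemma abSeq6' (u v : ℝ) (k : ℕ) : abSeq u v (3*k+6) =
    (u - (abSeq u v (3*k + 5)).1,
      v - (abSeq u v (3*k + 5)).1 * (u - (abSeq u v (3*k + 5)).1)) := by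
  have h : 3*k+6 = (3*k+2)+4 := by omega
  rw [h, abSeq]
  have h1 : (3*k+2) % 3 = 2 := by omega
  simp [h1]

lemma abSeq1' (u v : ℝ) : abSeq u v 1 = (-u, 1) := by rw [abSeq]
lemma abSeq2' (u v : ℝ) : abSeq u v 2 =
    (u * (2 * v - 1 - u ^ 2) / (v - u ^ 2), u ^ 2 - v) := by rw [abSeq]
lemma abSeq3' (u v : ℝ) : abSeq u v 3 =
    (-u * (v - 1) / (v - u ^ 2),
     (u ^ 2 + u ^ 4 + v ^ 3 - 3 * u ^ 2 * v) / (v - u ^ 2) ^ 2) := by rw [abSeq]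

def Pk (u v : ℝ) (k : ℕ) : Prop :=
  2 * u ≤ (abSeq u v (3 * k + 2)).1 ∧ (abSeq u v (3 * k + 2)).1 ≤ 3 * u ∧
  -2 * u ≤ (abSeq u v (3 * k + 3)).1 ∧ (abSeq u v (3 * k + 3)).1 ≤ -u ∧
  |(abSeq u v (3 * k + 1)).2| ≤ 1 ∧
  u ^ 2 - v - 1 ≤ (abSeq u v (3 * k + 2)).2 ∧ (abSeq u v (3 * k + 2)).2 ≤ u ^ 2 - v + 1 ∧
  v + 2 * u ^ 2 ≤ (abSeq u v (3 * k + 3)).2 ∧ (abSeq u v (3 * k + 3)).2 ≤ v + 6 * u ^ 2 ∧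
  (abSeq u v (3 * k + 1)).2 ≠ 0

set_option maxHeartbeats 2000000 in
lemma Pk_main (u v : ℝ) (hu : 0 < u) (hu2 : 6 ≤ u ^ 2)
    (hv1 : 3 * u ^ 2 - 1 ≤ v) (hv2 : 2 * u ^ 2 + 8 ≤ v) : ∀ k, Pk u v k := by
  have hu1 : 1 ≤ u := by nlinarith
  have hd0 : (0:ℝ) < v - u ^ 2 := by nlinarith
  intro k
  induction k using Nat.strong_induction_on with
  | _ k IH =>
  match k with
  | 0 =>
    unfold Pk
    rw [show (3*0+1) = 1 from rfl, show (3*0+2) = 2 from rfl, show (3*0+3) = 3 from rfl,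
      abSeq1', abSeq2', abSeq3']
    dsimp only
    have hsq : (0:ℝ) < (v - u ^ 2) ^ 2 := by positivity
    refine ⟨?_, ?_, ?_, ?_, by norm_num, by linarith, by linarith, ?_, ?_, one_ne_zero⟩
    · rw [le_div_iff₀ hd0]; nlinarith
    · rw [div_le_iff₀ hd0]; nlinarith
    · rw [le_div_iff₀ hd0]; nlinarith
    · rw [div_le_iff₀ hd0]; nlinarith
    · rw [le_div_iff₀ hsq]
      nlinarith [mul_nonneg (mul_nonneg (sq_nonneg u) hd0.le) (show (0:ℝ) ≤ u^2 - 1 by nlinarith),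
        mul_nonneg (sq_nonneg u) (sq_nonneg (u^2 - 1))]
    · rw [div_le_iff₀ hsq]
      nlinarith [mul_nonneg (mul_nonneg (sq_nonneg u)
          (show (0:ℝ) ≤ 4*(v - u^2) + (u^2 - 1) by nlinarith))
          (show (0:ℝ) ≤ (v - u^2) - (u^2 - 1) by nlinarith)]
  | (k+1) =>
    obtain ⟨a2l, a2u, a3l, a3u, b1abs, b2l, b2u, b3l, b3u, b1ne⟩ := IH k (by omega)
    -- bounds for index k+2
    set a := (abSeq u v (k + 2)).1 with ha_def
    set c := (abSeq u v (k + 2)).2 with hc_def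
    have hindex : ∃ m, k = 3*m ∨ k = 3*m+1 ∨ k = 3*m+2 := ⟨k/3, by omega⟩
    have hkey : (-2*u ≤ a ∧ a ≤ 3*u) ∧ |c| ≤ v + 6*u^2 ∧ c ≠ 0 := by
      obtain ⟨m, hm | hm | hm⟩ := hindex
      · have e : k + 2 = 3*m + 2 := by omega
        obtain ⟨q1, q2, _, _, _, q6, q7, _, _, _⟩ := IH m (by omega)
        rw [ha_def, hc_def, e]
        refine ⟨⟨by linarith, q2⟩, ?_, ?_⟩
        · rw [abs_le]; constructor <;> nlinarith
        · intro h0; rw [h0] at q7; nlinarith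
      · have e : k + 2 = 3*m + 3 := by omega
        obtain ⟨_, _, _, _, _, _, _, q8, q9, _⟩ := IH m (by omega)
        rw [ha_def, hc_def, e]
        obtain ⟨_, _, q3, q4, _, _, _, _, _, _⟩ := IH m (by omega)
        refine ⟨⟨by linarith, by linarith⟩, ?_, ?_⟩
        · rw [abs_le]; constructor <;> nlinarith
        · intro h0; rw [h0] at q8; nlinarith
      · have e : k + 2 = 3*(m+1) + 1 := by omega
        obtain ⟨_, _, _, _, q5, _, _, _, _, q10⟩ := IH (m+1) (by omega)
        rw [ha_def, hc_def, e]
        have ea : (abSeq u v (3*(m+1)+1)).1 = -u := by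
          rw [show 3*(m+1)+1 = 3*m+4 from by omega, abSeq4']
        rw [ea]
        refine ⟨⟨by linarith, by linarith⟩, ?_, q10⟩
        · have := abs_le.1 q5; rw [abs_le]; constructor <;> nlinarith
    obtain ⟨⟨hal, hau⟩, hcabs, hcne⟩ := hkey
    have hcl := (abs_le.1 hcabs).1
    have hcu := (abs_le.1 hcabs).2
    -- names for block k quantities
    set a2 := (abSeq u v (3*k + 2)).1 with ha2_def
    set b2 := (abSeq u v (3*k + 2)).2 with hb2_def
    set b3 := (abSeq u v (3*k + 3)).2 with hb3_def
    have hb2neg : b2 < 0 := by nlinarith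
    have hb3pos : 0 < b3 := by nlinarith
    have hb2ne : b2 ≠ 0 := ne_of_lt hb2neg
    have hb3ne : b3 ≠ 0 := ne_of_gt hb3pos
    -- β_{3k+4}
    set b4 := c / (b3 * b2) with hb4_def
    have hb4ne : b4 ≠ 0 := div_ne_zero hcne (mul_ne_zero hb3ne hb2ne)
    have hdenabs : |b3 * b2| = b3 * (-b2) := by
      rw [abs_mul, abs_of_pos hb3pos, abs_of_neg hb2neg]
    have hdenpos : 0 < |b3 * b2| := by rw [hdenabs]; exact mul_pos hb3pos (by linarith)
    have hb4abs : |b4| ≤ 1 := by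
      rw [hb4_def, abs_div, div_le_one hdenpos, hdenabs]
      nlinarith
    have hb4l := (abs_le.1 hb4abs).1
    have hb4u := (abs_le.1 hb4abs).2
    -- β_{3k+5}
    set b5 := u ^ 2 - v - b4 with hb5_def
    have hb5l : u ^ 2 - v - 1 ≤ b5 := by rw [hb5_def]; linarith
    have hb5u : b5 ≤ u ^ 2 - v + 1 := by rw [hb5_def]; linarith
    have hb5neg : b5 < 0 := by nlinarith
    have he : (0:ℝ) < -b5 := by linarith
    -- numerator
    set N := a + u * v - a2 * b4 with hN_def
    have hprod1 : a2 * b4 ≤ 3 * u := by nlinarith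
    have hprod2 : -(3*u) ≤ a2 * b4 := by nlinarith
    have hN1 : u * (-b5) ≤ N := by nlinarith
    have hN2 : N ≤ 2 * u * (-b5) := by nlinarith
    have hq1 : u ≤ N / (-b5) := by rw [le_div_iff₀ he]; linarith [hN1]
    have hq2 : N / (-b5) ≤ 2 * u := by rw [div_le_iff₀ he]; linarith [hN2]
    have hdiv : N / b5 = -(N / (-b5)) := by field_simp
    -- α_{3k+5}
    set x := u - N / b5 with hx_def
    have hx1 : 2 * u ≤ x := by rw [hx_def, hdiv]; linarith
    have hx2 : x ≤ 3 * u := by rw [hx_def, hdiv]; linarith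
    -- assemble
    unfold Pk
    rw [show 3*(k+1)+1 = 3*k+4 from by omega, show 3*(k+1)+2 = 3*k+5 from by omega,
        show 3*(k+1)+3 = 3*k+6 from by omega, abSeq6', abSeq5', abSeq4']
    dsimp only
    rw [← ha_def, ← hc_def, ← ha2_def, ← hb2_def, ← hb3_def, ← hb4_def, ← hb5_def, ← hN_def,
        ← hx_def]
    refine ⟨hx1, hx2, by linarith, by linarith, hb4abs, hb5l, hb5u, ?_, ?_, hb4ne⟩
    · nlinarith [mul_nonneg (sub_nonneg.2 hx1) (by linarith : (0:ℝ) ≤ x - 2*u)]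
    · nlinarith [mul_nonneg (sub_nonneg.2 hx1) (by linarith : (0:ℝ) ≤ 3*u - x),
        mul_nonneg (by linarith : (0:ℝ) ≤ 3*u - x) (by linarith : (0:ℝ) ≤ x - u)]

/-- If `u > 0`, `u² ≥ 6` and `v ≥ max{3u² - 1, 2u² + 8}`, then for all
`k ≥ 0`: `2u ≤ α_{3k+2} ≤ 3u`, `-2u ≤ α_{3k+3} ≤ -u`, `|β_{3k+1}| ≤ 1`,
`u² - v - 1 ≤ β_{3k+2} ≤ u² - v + 1`, and `v + 2u² ≤ β_{3k+3} ≤ v + 6u²`.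
In particular `β_n ≠ 0` for all `n ≥ 1`. -/
theorem abSeq_bounds (u v : ℝ) (hu : 0 < u) (hu2 : 6 ≤ u ^ 2)
    (hv : max (3 * u ^ 2 - 1) (2 * u ^ 2 + 8) ≤ v) :
    (∀ k : ℕ,
      2 * u ≤ (abSeq u v (3 * k + 2)).1 ∧ (abSeq u v (3 * k + 2)).1 ≤ 3 * u ∧
      -2 * u ≤ (abSeq u v (3 * k + 3)).1 ∧ (abSeq u v (3 * k + 3)).1 ≤ -u ∧
      |(abSeq u v (3 * k + 1)).2| ≤ 1 ∧
      u ^ 2 - v - 1 ≤ (abSeq u v (3 * k + 2)).2 ∧ (abSeq u v (3 * k + 2)).2 ≤ u ^ 2 - v + 1 ∧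
      v + 2 * u ^ 2 ≤ (abSeq u v (3 * k + 3)).2 ∧ (abSeq u v (3 * k + 3)).2 ≤ v + 6 * u ^ 2) ∧
    (∀ n : ℕ, 1 ≤ n → (abSeq u v n).2 ≠ 0) := by
  have hv1 : 3 * u ^ 2 - 1 ≤ v := le_trans (le_max_left _ _) hv
  have hv2 : 2 * u ^ 2 + 8 ≤ v := le_trans (le_max_right _ _) hv
  have main := Pk_main u v hu hu2 hv1 hv2
  constructor
  · intro k
    obtain ⟨h1, h2, h3, h4, h5, h6, h7, h8, h9, _⟩ := main k
    exact ⟨h1, h2, h3, h4, h5, h6, h7, h8, h9⟩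
  · intro n hn
    obtain ⟨m, hm | hm | hm⟩ : ∃ m, n = 3*m+1 ∨ n = 3*m+2 ∨ n = 3*m+3 := ⟨(n-1)/3, by omega⟩
    · obtain ⟨_, _, _, _, _, _, _, _, _, h10⟩ := main m
      rw [hm]; exact h10
    · obtain ⟨_, _, _, _, _, _, h7, _, _, _⟩ := main m
      rw [hm]; intro h0; rw [h0] at h7; nlinarith
    · obtain ⟨_, _, _, _, _, _, _, h8, _, _⟩ := main m
      rw [hm]; intro h0; rw [h0] at h8; nlinarith



end
end
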